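/- arXiv:2310.08245 — 4 statements merged into one kernel-verified Lean document; each statement's English description precedes it below -/
import Mathlib

section
/- Let λ : [0,∞) → ℝ be continuous and nonnegative and let y solve y'' = λ·y with y(0)=1, y'(0)=h ≥ 0. If J : [0,T) → ℝ is a positive C² function with J'' ≤ λ·J, J(0)=1 and J'(0) ≤ h, then J(t) ≤ y(t) for all t ∈ [0,T). -/
/-!
The solution `y` stays positive: up to its first zero `y` is positive, so `y'' = λ y ≥ 0`, hence
`y' ≥ y' 0 ≥ 0` and `y` is nondecreasing, which rules out the zero. With `y > 0`, the Wronskian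
`W = J' y - J y'` satisfies `W' = (J'' - λ J) y ≤ 0` and `W 0 = J' 0 - h ≤ 0`, so `W ≤ 0`;
since `(J / y)' = W / y²`, the ratio `J / y` is nonincreasing and stays below its initial value `1`.
-/

open Set

theorem monotoneOn_of_hasDerivAt_nonneg {D : Set ℝ} (hD : Convex ℝ D) {f f' : ℝ → ℝ}
    (hf : ∀ x ∈ D, HasDerivAt f (f' x) x) (hf' : ∀ x ∈ interior D, 0 ≤ f' x) :
    MonotoneOn f D :=
  monotoneOn_of_hasDerivWithinAt_nonneg hD (fun x hx ↦ (hf x hx).continuousAt.continuousWithinAt)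
    (fun x hx ↦ (hf x (interior_subset hx)).hasDerivWithinAt) hf'

theorem antitoneOn_of_hasDerivAt_nonpos {D : Set ℝ} (hD : Convex ℝ D) {f f' : ℝ → ℝ}
    (hf : ∀ x ∈ D, HasDerivAt f (f' x) x) (hf' : ∀ x ∈ interior D, f' x ≤ 0) :
    AntitoneOn f D :=
  antitoneOn_of_hasDerivWithinAt_nonpos hD (fun x hx ↦ (hf x hx).continuousAt.continuousWithinAt)
    (fun x hx ↦ (hf x (interior_subset hx)).hasDerivWithinAt) hf'

section Solution

variable {l y y' : ℝ → ℝ}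

theorem le_of_pos_on_Ico_of_deriv_deriv_eq_mul (hl : ∀ t ≥ (0:ℝ), 0 ≤ l t)
    (hy : ∀ t ≥ (0:ℝ), HasDerivAt y (y' t) t)
    (hy' : ∀ t ≥ (0:ℝ), HasDerivAt y' (l t * y t) t) (hy'0 : 0 ≤ y' 0)
    {a : ℝ} (ha : 0 ≤ a) (hpos : ∀ t ∈ Ico 0 a, 0 < y t) : y 0 ≤ y a := by
  have hy'_mono : MonotoneOn y' (Icc 0 a) := by
    refine monotoneOn_of_hasDerivAt_nonneg (convex_Icc 0 a) (fun t ht ↦ hy' t ht.1) ?_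
    rw [interior_Icc]
    exact fun t ht ↦ mul_nonneg (hl t ht.1.le) (hpos t ⟨ht.1.le, ht.2⟩).le
  have hy_mono : MonotoneOn y (Icc 0 a) := by
    refine monotoneOn_of_hasDerivAt_nonneg (convex_Icc 0 a) (fun t ht ↦ hy t ht.1) ?_
    rw [interior_Icc]
    exact fun t ht ↦
      hy'0.trans (hy'_mono (left_mem_Icc.2 ha) (Ioo_subset_Icc_self ht) ht.1.le)
  exact hy_mono (left_mem_Icc.2 ha) (right_mem_Icc.2 ha) ha

theorem pos_of_deriv_deriv_eq_mul (hl : ∀ t ≥ (0:ℝ), 0 ≤ l t)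
    (hy : ∀ t ≥ (0:ℝ), HasDerivAt y (y' t) t)
    (hy' : ∀ t ≥ (0:ℝ), HasDerivAt y' (l t * y t) t) (hy0 : 0 < y 0) (hy'0 : 0 ≤ y' 0) :
    ∀ t ≥ (0:ℝ), 0 < y t := by
  by_contra! hzero
  set S : Set ℝ := Ici 0 ∩ y ⁻¹' Iic 0
  have hS_closed : IsClosed S :=
    ContinuousOn.preimage_isClosed_of_isClosed
      (fun t ht ↦ (hy t ht).continuousAt.continuousWithinAt) isClosed_Ici isClosed_Iic
  have hS_bdd : BddBelow S := ⟨0, fun _ ht ↦ ht.1⟩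
  obtain ⟨ha, hya⟩ : sInf S ∈ S := hS_closed.csInf_mem hzero hS_bdd
  have hpos : ∀ t ∈ Ico 0 (sInf S), 0 < y t := fun t ht ↦
    lt_of_not_ge fun hyt ↦ (csInf_le hS_bdd ⟨ht.1, hyt⟩).not_gt ht.2
  have hy_le := le_of_pos_on_Ico_of_deriv_deriv_eq_mul hl hy hy' hy'0 ha hpos
  exact (hy0.trans_le hy_le).not_ge hya

end Solution

section Wronskian

variable {l y y' J J' J'' : ℝ → ℝ} {D : Set ℝ}

theorem antitoneOn_wronskian (hD : Convex ℝ D)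
    (hy : ∀ t ∈ D, HasDerivAt y (y' t) t) (hy' : ∀ t ∈ D, HasDerivAt y' (l t * y t) t)
    (hJ : ∀ t ∈ D, HasDerivAt J (J' t) t) (hJ' : ∀ t ∈ D, HasDerivAt J' (J'' t) t)
    (hJineq : ∀ t ∈ D, J'' t ≤ l t * J t) (hypos : ∀ t ∈ D, 0 ≤ y t) :
    AntitoneOn (fun t ↦ J' t * y t - J t * y' t) D := by
  refine antitoneOn_of_hasDerivAt_nonpos hD (f' := fun t ↦ (J'' t - l t * J t) * y t)
    (fun t ht ↦ ?_) fun t ht ↦ ?_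
  · exact (((hJ' t ht).mul (hy t ht)).sub ((hJ t ht).mul (hy' t ht))).congr_deriv (by ring)
  · have ht := interior_subset ht
    exact mul_nonpos_of_nonpos_of_nonneg (sub_nonpos.2 (hJineq t ht)) (hypos t ht)

theorem antitoneOn_div_of_wronskian_nonpos (hD : Convex ℝ D)
    (hy : ∀ t ∈ D, HasDerivAt y (y' t) t) (hJ : ∀ t ∈ D, HasDerivAt J (J' t) t)
    (hW : ∀ t ∈ D, J' t * y t - J t * y' t ≤ 0) (hypos : ∀ t ∈ D, 0 < y t) :
    AntitoneOn (fun t ↦ J t / y t) D :=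
  antitoneOn_of_hasDerivAt_nonpos hD (fun t ht ↦ (hJ t ht).div (hy t ht) (hypos t ht).ne')
    fun t ht ↦ div_nonpos_of_nonpos_of_nonneg (hW t (interior_subset ht)) (sq_nonneg _)

end Wronskian

theorem convex_setOf_nonneg_coe_lt (T : EReal) : Convex ℝ {t : ℝ | 0 ≤ t ∧ (t : EReal) < T} :=
  (ordConnected_Ici.inter (ordConnected_Iio.preimage_mono EReal.coe_strictMono.monotone)).convex

theorem stmt_3_general (l y y' J J' J'' : ℝ → ℝ) (h : ℝ) (T : EReal)
    (hlnn : ∀ t ≥ (0:ℝ), 0 ≤ l t)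
    (hh : 0 ≤ h)
    (hy : ∀ t ≥ (0:ℝ), HasDerivAt y (y' t) t)
    (hy' : ∀ t ≥ (0:ℝ), HasDerivAt y' (l t * y t) t)
    (hy0 : y 0 = 1) (hy'0 : y' 0 = h)
    (hT : 0 < T)
    (hJ : ∀ t : ℝ, 0 ≤ t → (t : EReal) < T → HasDerivAt J (J' t) t)
    (hJ' : ∀ t : ℝ, 0 ≤ t → (t : EReal) < T → HasDerivAt J' (J'' t) t)
    (hJineq : ∀ t : ℝ, 0 ≤ t → (t : EReal) < T → J'' t ≤ l t * J t)
    (hJ0 : J 0 = 1) (hJ'0 : J' 0 ≤ h) :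
    ∀ t : ℝ, 0 ≤ t → (t : EReal) < T → J t ≤ y t := by
  set D : Set ℝ := {t : ℝ | 0 ≤ t ∧ (t : EReal) < T}
  have hD : Convex ℝ D := convex_setOf_nonneg_coe_lt T
  have h0 : (0:ℝ) ∈ D := ⟨le_rfl, by exact_mod_cast hT⟩
  have hypos := pos_of_deriv_deriv_eq_mul hlnn hy hy' (by simp [hy0]) (hy'0 ▸ hh)
  have hyD : ∀ t ∈ D, HasDerivAt y (y' t) t := fun t ht ↦ hy t ht.1
  have hJD : ∀ t ∈ D, HasDerivAt J (J' t) t := fun t ht ↦ hJ t ht.1 ht.2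
  have hW : ∀ t ∈ D, J' t * y t - J t * y' t ≤ 0 := fun t ht ↦ calc
    _ ≤ J' 0 * y 0 - J 0 * y' 0 :=
      antitoneOn_wronskian hD hyD (fun t ht ↦ hy' t ht.1) hJD (fun t ht ↦ hJ' t ht.1 ht.2)
        (fun t ht ↦ hJineq t ht.1 ht.2) (fun t ht ↦ (hypos t ht.1).le) h0 ht ht.1
    _ ≤ 0 := by simp [hy0, hJ0, hy'0, hJ'0]
  intro t ht0 htT
  have hratio : J t / y t ≤ J 0 / y 0 :=
    antitoneOn_div_of_wronskian_nonpos hD hyD hJD hW (fun t ht ↦ hypos t ht.1) h0 ⟨ht0, htT⟩ ht0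
  rwa [hJ0, hy0, div_one, div_le_one (hypos t ht0)] at hratio

/-- Comparison lemma: if `J` is a positive `C²` function on `[0,T)` with
`J'' ≤ l·J`, `J 0 = 1`, `J' 0 ≤ h`, and `y` solves `y'' = l·y` with the same
initial data `y 0 = 1`, `y' 0 = h ≥ 0`, then `J ≤ y` on `[0,T)`. -/
theorem stmt_3 (l y y' J J' J'' : ℝ → ℝ) (h : ℝ) (T : EReal)
    (hl : ContinuousOn l (Set.Ici 0))
    (hlnn : ∀ t ≥ (0:ℝ), 0 ≤ l t)
    (hh : 0 ≤ h)
    (hy : ∀ t ≥ (0:ℝ), HasDerivAt y (y' t) t)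
    (hy' : ∀ t ≥ (0:ℝ), HasDerivAt y' (l t * y t) t)
    (hy'c : ContinuousOn y' (Set.Ici 0))
    (hy0 : y 0 = 1) (hy'0 : y' 0 = h)
    (hT : 0 < T)
    (hJpos : ∀ t : ℝ, 0 ≤ t → (t : EReal) < T → 0 < J t)
    (hJ : ∀ t : ℝ, 0 ≤ t → (t : EReal) < T → HasDerivAt J (J' t) t)
    (hJ' : ∀ t : ℝ, 0 ≤ t → (t : EReal) < T → HasDerivAt J' (J'' t) t)
    (hJ''c : ContinuousOn J'' {t : ℝ | 0 ≤ t ∧ (t : EReal) < T})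
    (hJineq : ∀ t : ℝ, 0 ≤ t → (t : EReal) < T → J'' t ≤ l t * J t)
    (hJ0 : J 0 = 1) (hJ'0 : J' 0 ≤ h) :
    ∀ t : ℝ, 0 ≤ t → (t : EReal) < T → J t ≤ y t :=
  stmt_3_general l y y' J J' J'' h T hlnn hh hy hy' hy0 hy'0 hT hJ hJ' hJineq hJ0 hJ'0
end

section
/- Let λ : [0,∞) → ℝ be continuous, nonnegative, and nonincreasing with b₀ := ∫₀^∞ t·λ(t) dt < ∞ and b₁ := ∫₀^∞ λ(t) dt < ∞. Let h ≥ 0 and y solve y'' = λ·y, y(0)=1, y'(0)=h. Then y'(t) ≤ e^{b₀}·(h·(1+b₀) + b₁) for all t ≥ 0. -/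
open MeasureTheory

/-- With `l` continuous, nonnegative, nonincreasing and finite moments
`b₀ = ∫₀^∞ t·l t dt`, `b₁ = ∫₀^∞ l t dt`, and `y'' = l·y`, `y 0 = 1`,
`y' 0 = h ≥ 0`, we have `y' t ≤ e^{b₀}·(h·(1+b₀) + b₁)` for all `t ≥ 0`. -/
theorem stmt_7 (l y y' : ℝ → ℝ) (h : ℝ)
    (hl : ContinuousOn l (Set.Ici 0))
    (hlnn : ∀ t ≥ (0:ℝ), 0 ≤ l t)
    (hlmono : AntitoneOn l (Set.Ici 0))
    (hb0int : IntegrableOn (fun t => t * l t) (Set.Ioi 0))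
    (hb1int : IntegrableOn l (Set.Ioi 0))
    (hh : 0 ≤ h)
    (hy : ∀ t ≥ (0:ℝ), HasDerivAt y (y' t) t)
    (hy' : ∀ t ≥ (0:ℝ), HasDerivAt y' (l t * y t) t)
    (hy'c : ContinuousOn y' (Set.Ici 0))
    (hy0 : y 0 = 1) (hy'0 : y' 0 = h) :
    ∀ t ≥ (0:ℝ),
      y' t ≤ Real.exp (∫ s in Set.Ioi (0:ℝ), s * l s) *
        (h * (1 + ∫ s in Set.Ioi (0:ℝ), s * l s) + ∫ s in Set.Ioi (0:ℝ), l s) := by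
  set b0 := ∫ s in Set.Ioi (0:ℝ), s * l s with hb0def
  set b1 := ∫ s in Set.Ioi (0:ℝ), l s with hb1def
  have ycont : ContinuousOn y (Set.Ici 0) :=
    fun t ht => (hy t ht).continuousAt.continuousWithinAt
  -- Step A : y' is nonnegative on [0, ∞)
  have hA : ∀ t ≥ (0:ℝ), 0 ≤ y' t := by
    by_contra hcon
    push_neg at hcon
    obtain ⟨t₀, ht₀, ht₀neg⟩ := hcon
    set S : Set ℝ := {t | 0 ≤ t ∧ y' t < 0} with hS
    have hSne : S.Nonempty := ⟨t₀, ht₀, ht₀neg⟩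
    have hSbd : BddBelow S := ⟨0, fun s hs => hs.1⟩
    set t₁ := sInf S with ht₁def
    have ht₁0 : 0 ≤ t₁ := le_csInf hSne fun s hs => hs.1
    have hlt : ∀ s, 0 ≤ s → s < t₁ → 0 ≤ y' s := by
      intro s hs0 hst
      by_contra hneg
      push_neg at hneg
      exact absurd (csInf_le hSbd ⟨hs0, hneg⟩) (not_le.mpr hst)
    -- y is monotone on [0, t₁]
    have hymono : MonotoneOn y (Set.Icc 0 t₁) := by
      apply monotoneOn_of_deriv_nonneg (convex_Icc 0 t₁)
        (ycont.mono (Set.Icc_subset_Ici_self))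
      · intro x hx
        rw [interior_Icc] at hx
        exact (hy x hx.1.le).differentiableAt.differentiableWithinAt
      · intro x hx
        rw [interior_Icc] at hx
        rw [(hy x hx.1.le).deriv]
        exact hlt x hx.1.le hx.2
    have hyt₁ : 1 ≤ y t₁ := by
      have := hymono (Set.left_mem_Icc.mpr ht₁0) (Set.right_mem_Icc.mpr ht₁0) ht₁0
      rwa [hy0] at this
    -- y' t₁ ≥ 0
    have hy't₁ : 0 ≤ y' t₁ := by
      rcases eq_or_lt_of_le ht₁0 with h0 | h0
      · rw [← h0, hy'0]; exact hh
      · have hmem : t₁ ∈ closure (Set.Ico 0 t₁) := by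
          rw [closure_Ico h0.ne]
          exact Set.right_mem_Icc.mpr ht₁0
        have hne : (nhdsWithin t₁ (Set.Ico 0 t₁)).NeBot :=
          mem_closure_iff_nhdsWithin_neBot.mp hmem
        have htend : Filter.Tendsto y' (nhdsWithin t₁ (Set.Ico 0 t₁)) (nhds (y' t₁)) :=
          (hy'c t₁ ht₁0).mono (Set.Ico_subset_Icc_self.trans Set.Icc_subset_Ici_self)
        refine ge_of_tendsto htend ?_
        filter_upwards [self_mem_nhdsWithin] with s hs
        exact hlt s hs.1 hs.2
    -- y is positive near t₁
    have hypos : ∀ᶠ s in nhds t₁, 0 < y s :=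
      (hy t₁ ht₁0).continuousAt (lt_mem_nhds (by linarith : (0:ℝ) < y t₁))
    obtain ⟨ε, hε, hball⟩ := Metric.eventually_nhds_iff.mp hypos
    set δ := ε / 2 with hδ
    have hδpos : 0 < δ := by positivity
    -- y' monotone on [t₁, t₁ + δ]
    have hy'mono : MonotoneOn y' (Set.Icc t₁ (t₁ + δ)) := by
      apply monotoneOn_of_deriv_nonneg (convex_Icc _ _)
        (hy'c.mono (by
          intro x hx
          exact le_trans ht₁0 hx.1))
      · intro x hx
        rw [interior_Icc] at hx
        exact (hy' x (le_trans ht₁0 hx.1.le)).differentiableAt.differentiableWithinAt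
      · intro x hx
        rw [interior_Icc] at hx
        rw [(hy' x (le_trans ht₁0 hx.1.le)).deriv]
        have hyx : 0 < y x := by
          apply hball
          rw [Real.dist_eq, abs_lt]
          constructor <;> [linarith [hx.1]; linarith [hx.2, hδpos]]
        exact mul_nonneg (hlnn x (le_trans ht₁0 hx.1.le)) hyx.le
    obtain ⟨s, hsS, hslt⟩ := (csInf_lt_iff hSbd hSne).mp
      (by linarith : sInf S < t₁ + δ)
    have hst₁ : t₁ ≤ s := csInf_le hSbd hsS
    have : 0 ≤ y' s := by
      have := hy'mono (Set.left_mem_Icc.mpr (by linarith)) ⟨hst₁, hslt.le⟩ hst₁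
      linarith [hy't₁]
    exact absurd this (not_le.mpr hsS.2)
  -- y is monotone on [0, ∞), hence y ≥ 1
  have hymonoI : MonotoneOn y (Set.Ici 0) := by
    apply monotoneOn_of_deriv_nonneg (convex_Ici 0) ycont
    · intro x hx
      rw [interior_Ici] at hx
      exact (hy x hx.le).differentiableAt.differentiableWithinAt
    · intro x hx
      rw [interior_Ici] at hx
      rw [(hy x hx.le).deriv]
      exact hA x hx.le
  have hyge1 : ∀ t ≥ (0:ℝ), 1 ≤ y t := by
    intro t ht
    have := hymonoI Set.self_mem_Ici ht ht
    rwa [hy0] at this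
  -- y' is monotone on [0, ∞)
  have hy'monoI : MonotoneOn y' (Set.Ici 0) := by
    apply monotoneOn_of_deriv_nonneg (convex_Ici 0) hy'c
    · intro x hx
      rw [interior_Ici] at hx
      exact (hy' x hx.le).differentiableAt.differentiableWithinAt
    · intro x hx
      rw [interior_Ici] at hx
      rw [(hy' x hx.le).deriv]
      exact mul_nonneg (hlnn x hx.le) (le_trans zero_le_one (hyge1 x hx.le))
  -- Step E : y t ≤ 1 + t * y' t
  have hE : ∀ t ≥ (0:ℝ), y t ≤ 1 + t * y' t := by
    intro t ht
    rcases eq_or_lt_of_le ht with h0 | h0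
    · rw [← h0, hy0]; norm_num
    · obtain ⟨c, hc, hceq⟩ := exists_hasDerivAt_eq_slope y y' h0
        (ycont.mono (fun x hx => hx.1)) (fun x hx => hy x hx.1.le)
      rw [hy0, sub_zero] at hceq
      have hyt : y t = 1 + t * y' c := by
        field_simp at hceq
        linarith
      have : y' c ≤ y' t := hy'monoI (Set.mem_Ici.mpr hc.1.le) (Set.mem_Ici.mpr ht) hc.2.le
      nlinarith
  -- Step F : integral equation for y'
  have hlyc : ContinuousOn (fun s => l s * y s) (Set.Ici 0) := hl.mul ycont
  have hF : ∀ t ≥ (0:ℝ), y' t = h + ∫ s in (0:ℝ)..t, l s * y s := by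
    intro t ht
    have hint : IntervalIntegrable (fun s => l s * y s) volume 0 t := by
      apply ContinuousOn.intervalIntegrable
      rw [Set.uIcc_of_le ht]
      exact hlyc.mono Set.Icc_subset_Ici_self
    have := intervalIntegral.integral_eq_sub_of_hasDerivAt
      (f := y') (f' := fun s => l s * y s)
      (fun s hs => hy' s (by rw [Set.uIcc_of_le ht] at hs; exact hs.1)) hint
    rw [this, hy'0]
    ring
  -- Extended continuous versions of the coefficient functions
  set m : ℝ → ℝ := fun s => max s 0 with hm
  have hmc : Continuous m := continuous_id.max continuous_const
  have hmmem : ∀ s, m s ∈ Set.Ici (0:ℝ) := fun s => le_max_right s 0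
  have hlc : Continuous (fun s => l (m s)) := hl.comp_continuous hmc hmmem
  have hy'cc : Continuous (fun s => y' (m s)) := hy'c.comp_continuous hmc hmmem
  set k : ℝ → ℝ := fun s => m s * l (m s) with hk
  set g : ℝ → ℝ := fun s => m s * l (m s) * y' (m s) with hg
  have hkc : Continuous k := hmc.mul hlc
  have hgc : Continuous g := hkc.mul hy'cc
  have hknn : ∀ s, 0 ≤ k s := fun s =>
    mul_nonneg (le_max_right _ _) (hlnn _ (le_max_right _ _))
  set C : ℝ := h + b1 with hC
  set K : ℝ → ℝ := fun t => ∫ s in (0:ℝ)..t, k s with hK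
  set G : ℝ → ℝ := fun t => C + ∫ s in (0:ℝ)..t, g s with hG
  have hKderiv : ∀ t, HasDerivAt K (k t) t := fun t =>
    intervalIntegral.integral_hasDerivAt_right (hkc.intervalIntegrable _ _)
      (hkc.stronglyMeasurableAtFilter _ _) hkc.continuousAt
  have hGderiv : ∀ t, HasDerivAt G (g t) t := fun t =>
    (intervalIntegral.integral_hasDerivAt_right (hgc.intervalIntegrable _ _)
      (hgc.stronglyMeasurableAtFilter _ _) hgc.continuousAt).const_add C
  -- b1 ≥ 0, b0 ≥ 0
  have hb1nn : 0 ≤ b1 :=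
    setIntegral_nonneg measurableSet_Ioi (fun s hs => hlnn s (le_of_lt hs))
  have hb0nn : 0 ≤ b0 :=
    setIntegral_nonneg measurableSet_Ioi
      (fun s hs => mul_nonneg (le_of_lt hs) (hlnn s (le_of_lt hs)))
  -- y' t ≤ G t for t ≥ 0
  have hyG : ∀ t ≥ (0:ℝ), y' t ≤ G t := by
    intro t ht
    rw [hF t ht]
    have hint1 : IntervalIntegrable (fun s => l s * y s) volume 0 t := by
      apply ContinuousOn.intervalIntegrable
      rw [Set.uIcc_of_le ht]
      exact hlyc.mono Set.Icc_subset_Ici_self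
    have hint2 : IntervalIntegrable (fun s => l s + g s) volume 0 t := by
      apply ContinuousOn.intervalIntegrable
      rw [Set.uIcc_of_le ht]
      exact ((hl.mono Set.Icc_subset_Ici_self).add hgc.continuousOn)
    have hintl : IntervalIntegrable l volume 0 t := by
      apply ContinuousOn.intervalIntegrable
      rw [Set.uIcc_of_le ht]
      exact hl.mono Set.Icc_subset_Ici_self
    have step1 : (∫ s in (0:ℝ)..t, l s * y s) ≤ ∫ s in (0:ℝ)..t, (l s + g s) := by
      apply intervalIntegral.integral_mono_on ht hint1 hint2
      intro s hs
      have hs0 : 0 ≤ s := hs.1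
      have hms : m s = s := max_eq_left hs0
      have h1 := hE s hs0
      have h2 := hlnn s hs0
      have h3 : g s = s * l s * y' s := by simp only [hg, hms]
      nlinarith [mul_le_mul_of_nonneg_left h1 h2]
    have step2 : (∫ s in (0:ℝ)..t, (l s + g s))
        = (∫ s in (0:ℝ)..t, l s) + ∫ s in (0:ℝ)..t, g s :=
      intervalIntegral.integral_add hintl (hgc.intervalIntegrable _ _)
    have step3 : (∫ s in (0:ℝ)..t, l s) ≤ b1 := by
      rw [intervalIntegral.integral_of_le ht]
      apply setIntegral_mono_set hb1int
      · filter_upwards [ae_restrict_mem measurableSet_Ioi] with s hs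
        exact hlnn s (le_of_lt hs)
      · exact (Set.Ioc_subset_Ioi_self).eventuallyLE
    have : G t = h + b1 + ∫ s in (0:ℝ)..t, g s := by rw [hG]
    linarith
  -- φ = G * exp (-K) is antitone on [0, ∞)
  set φ : ℝ → ℝ := fun t => G t * Real.exp (-K t) with hφ
  have hφderiv : ∀ t, HasDerivAt φ
      (g t * Real.exp (-K t) + G t * (Real.exp (-K t) * -(k t))) t := by
    intro t
    exact (hGderiv t).mul ((hKderiv t).neg.exp)
  have hφmono : AntitoneOn φ (Set.Ici 0) := by
    apply antitoneOn_of_deriv_nonpos (convex_Ici 0)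
      (continuous_iff_continuousAt.mpr
        (fun x => (hφderiv x).differentiableAt.continuousAt)).continuousOn
    · intro x hx
      exact (hφderiv x).differentiableAt.differentiableWithinAt
    · intro x hx
      rw [interior_Ici] at hx
      rw [(hφderiv x).deriv]
      have hx0 : 0 ≤ x := hx.le
      have h1 : y' x ≤ G x := hyG x hx0
      have h2 : 0 ≤ k x := hknn x
      have h3 : g x = k x * y' x := by
        simp only [hg, hk, hm, max_eq_left hx0]
      have h4 : g x ≤ k x * G x := by
        rw [h3]; exact mul_le_mul_of_nonneg_left h1 h2
      nlinarith [Real.exp_pos (-K x)]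
  -- conclusion
  intro t ht
  have hφt : φ t ≤ φ 0 := hφmono Set.self_mem_Ici (Set.mem_Ici.mpr ht) ht
  have hφ0 : φ 0 = C := by
    simp [hφ, hG, hK, intervalIntegral.integral_same]
  rw [hφ0] at hφt
  have hGle : G t ≤ C * Real.exp (K t) := by
    have hcalc : G t = G t * Real.exp (-K t) * Real.exp (K t) := by
      rw [mul_assoc, ← Real.exp_add]
      simp
    rw [hcalc]
    exact mul_le_mul_of_nonneg_right hφt (Real.exp_pos _).le
  have hKle : K t ≤ b0 := by
    have heq : K t = ∫ s in Set.Ioc (0:ℝ) t, s * l s := by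
      simp only [hK]
      rw [intervalIntegral.integral_of_le ht]
      apply setIntegral_congr_fun measurableSet_Ioc
      intro s hs
      simp only [hk, hm, max_eq_left hs.1.le]
    rw [heq]
    apply setIntegral_mono_set hb0int
    · filter_upwards [ae_restrict_mem measurableSet_Ioi] with s hs
      exact mul_nonneg (le_of_lt hs) (hlnn s (le_of_lt hs))
    · exact (Set.Ioc_subset_Ioi_self).eventuallyLE
  have hCnn : 0 ≤ C := add_nonneg hh hb1nn
  calc y' t ≤ G t := hyG t ht
    _ ≤ C * Real.exp (K t) := hGle
    _ ≤ C * Real.exp b0 :=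
        mul_le_mul_of_nonneg_left (Real.exp_le_exp.mpr hKle) hCnn
    _ ≤ Real.exp b0 * (h * (1 + b0) + b1) := by
        rw [hC]
        nlinarith [mul_nonneg (mul_nonneg (Real.exp_pos b0).le hh) hb0nn]
end

section
/- Let λ : [0,∞) → ℝ be continuous, nonnegative, nonincreasing with b₀ := ∫₀^∞ t·λ(t) dt < ∞ and b₁ := ∫₀^∞ λ(t) dt. Let h ≥ 0 and y solve y'' = λ·y, y(0)=1, y'(0)=h. Then y(t) ≤ e^{b₀}·(h·(1+b₀) + b₁)·t + 1 for all t ≥ 0. -/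
open MeasureTheory Set

/-!
Since `y'(0) ≥ 0` and `l ≥ 0`, the solution stays positive, so `y'` is nondecreasing and
`y t ≤ 1 + t y'(t)`. Hence `y'' ≤ l + t l y'`, and with the integrating factor
`exp (-∫₀ᵗ s l s ds)` this gives `y'(t) ≤ (h + b₁) e^{b₀}`; plugging this back into
`y t ≤ 1 + t y'(t)` yields the bound.
-/

section Calculus

variable {f f' : ℝ → ℝ} {a b : ℝ}

theorem monotoneOn_of_hasDerivAt_of_interior_nonneg {D : Set ℝ} (hD : Convex ℝ D)
    (hf : ∀ x ∈ D, HasDerivAt f (f' x) x) (hf' : ∀ x ∈ interior D, 0 ≤ f' x) :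
    MonotoneOn f D :=
  monotoneOn_of_hasDerivWithinAt_nonneg hD
    (fun x hx => (hf x hx).continuousAt.continuousWithinAt)
    (fun x hx => (hf x (interior_subset hx)).hasDerivWithinAt) hf'

theorem ContinuousOn.intervalIntegrable_of_Ici (hf : ContinuousOn f (Ici a)) (hab : a ≤ b) :
    IntervalIntegrable f volume a b :=
  (hf.mono (by rw [uIcc_of_le hab]; exact Icc_subset_Ici_self)).intervalIntegrable

theorem ContinuousOn.hasDerivAt_integral_of_Ici (hf : ContinuousOn f (Ici a)) (hab : a < b) :
    HasDerivAt (fun u => ∫ s in a..u, f s) (f b) b :=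
  intervalIntegral.integral_hasDerivAt_right (hf.intervalIntegrable_of_Ici hab.le)
    ((hf.mono Ioi_subset_Ici_self).stronglyMeasurableAtFilter isOpen_Ioi b hab)
    (hf.continuousAt (Ici_mem_nhds hab))

theorem ContinuousOn.continuousOn_integral_Icc_of_Ici (hf : ContinuousOn f (Ici a))
    (hab : a ≤ b) : ContinuousOn (fun u => ∫ s in a..u, f s) (Icc a b) := by
  rw [← uIcc_of_le hab]
  exact intervalIntegral.continuousOn_primitive_interval
    ((hf.mono (uIcc_of_le hab ▸ Icc_subset_Ici_self)).integrableOn_compact isCompact_uIcc)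

theorem intervalIntegral_le_setIntegral_Ioi (hf : IntegrableOn f (Ioi a))
    (hnn : ∀ s > a, 0 ≤ f s) (hab : a ≤ b) :
    ∫ s in a..b, f s ≤ ∫ s in Ioi a, f s := by
  rw [intervalIntegral.integral_of_le hab]
  exact setIntegral_mono_set hf ((ae_restrict_iff' measurableSet_Ioi).2 (ae_of_all _ hnn))
    Ioc_subset_Ioi_self.eventuallyLE

end Calculus

structure SolvesOnIci (l y y' : ℝ → ℝ) : Prop where
  hasDerivAt : ∀ t ≥ (0 : ℝ), HasDerivAt y (y' t) t
  hasDerivAt_deriv : ∀ t ≥ (0 : ℝ), HasDerivAt y' (l t * y t) t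

namespace SolvesOnIci

variable {l y y' : ℝ → ℝ}

theorem continuousOn (hsol : SolvesOnIci l y y') : ContinuousOn y (Ici 0) :=
  fun t ht => (hsol.hasDerivAt t ht).continuousAt.continuousWithinAt

theorem continuousOn_deriv (hsol : SolvesOnIci l y y') : ContinuousOn y' (Ici 0) :=
  fun t ht => (hsol.hasDerivAt_deriv t ht).continuousAt.continuousWithinAt

theorem pos (hsol : SolvesOnIci l y y') (hl : ∀ t ≥ (0 : ℝ), 0 ≤ l t) (hy0 : y 0 = 1)
    (hy'0 : 0 ≤ y' 0) : ∀ t ≥ (0 : ℝ), 0 < y t := by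
  -- at the first zero `T` of `y`, monotonicity of `y'` and then of `y` on `[0, T]` give `y T ≥ 1`
  by_contra! hneg
  set K := Ici (0 : ℝ) ∩ y ⁻¹' Iic 0
  have hK : IsClosed K :=
    hsol.continuousOn.preimage_isClosed_of_isClosed isClosed_Ici isClosed_Iic
  have hbdd : BddBelow K := ⟨0, fun _ hs => hs.1⟩
  obtain ⟨hT0, hyT⟩ : 0 ≤ sInf K ∧ y (sInf K) ≤ 0 :=
    hK.csInf_mem (by simpa [Set.Nonempty, K] using hneg) hbdd
  set T := sInf K
  have hpos : ∀ s ∈ Ico 0 T, 0 < y s := fun s hs => by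
    by_contra! hys
    exact hs.2.not_ge (csInf_le hbdd ⟨hs.1, hys⟩)
  have hy'mono : MonotoneOn y' (Icc 0 T) :=
    monotoneOn_of_hasDerivAt_of_interior_nonneg (convex_Icc 0 T)
      (fun s hs => hsol.hasDerivAt_deriv s hs.1) fun s hs => by
        rw [interior_Icc] at hs
        exact mul_nonneg (hl s hs.1.le) (hpos s (Ioo_subset_Ico_self hs)).le
  have hymono : MonotoneOn y (Icc 0 T) :=
    monotoneOn_of_hasDerivAt_of_interior_nonneg (convex_Icc 0 T)
      (fun s hs => hsol.hasDerivAt s hs.1) fun s hs => by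
        rw [interior_Icc] at hs
        exact hy'0.trans (hy'mono ⟨le_rfl, hT0⟩ (Ioo_subset_Icc_self hs) hs.1.le)
  have := hymono ⟨le_rfl, hT0⟩ ⟨hT0, le_rfl⟩ hT0
  linarith

theorem monotoneOn_deriv (hsol : SolvesOnIci l y y') (hl : ∀ t ≥ (0 : ℝ), 0 ≤ l t)
    (hy0 : y 0 = 1) (hy'0 : 0 ≤ y' 0) : MonotoneOn y' (Ici 0) :=
  monotoneOn_of_hasDerivAt_of_interior_nonneg (convex_Ici 0) hsol.hasDerivAt_deriv fun t ht =>
    mul_nonneg (hl t (interior_subset ht)) (hsol.pos hl hy0 hy'0 t (interior_subset ht)).le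

theorem le_one_add_mul_deriv (hsol : SolvesOnIci l y y') (hmono : MonotoneOn y' (Ici 0))
    (hy0 : y 0 = 1) : ∀ t ≥ (0 : ℝ), y t ≤ 1 + t * y' t := by
  intro t ht
  have : MonotoneOn (fun u => u * y' t - y u) (Icc 0 t) :=
    monotoneOn_of_hasDerivAt_of_interior_nonneg (convex_Icc 0 t)
      (fun u hu => ((hasDerivAt_mul_const (y' t)).sub (hsol.hasDerivAt u hu.1)))
      fun u hu => by
        rw [interior_Icc] at hu
        exact sub_nonneg.2 (hmono hu.1.le ht hu.2.le)
  have := this ⟨le_rfl, ht⟩ ⟨ht, le_rfl⟩ ht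
  simp only [zero_mul, hy0] at this
  linarith

theorem deriv_mul_exp_neg_le (hsol : SolvesOnIci l y y') (hl : ContinuousOn l (Ici 0))
    (hlnn : ∀ t ≥ (0 : ℝ), 0 ≤ l t) (hkey : ∀ t ≥ (0 : ℝ), y t ≤ 1 + t * y' t) {t : ℝ}
    (ht : 0 ≤ t) :
    y' t * Real.exp (-∫ s in (0 : ℝ)..t, s * l s) ≤ y' 0 + ∫ s in (0 : ℝ)..t, l s := by
  have hsl : ContinuousOn (fun s => s * l s) (Ici 0) := continuousOn_id.mul hl
  have hw : AntitoneOn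
      (fun u => y' u * Real.exp (-∫ s in (0 : ℝ)..u, s * l s) - ∫ s in (0 : ℝ)..u, l s)
      (Icc 0 t) := by
    refine antitoneOn_of_hasDerivWithinAt_nonpos (convex_Icc 0 t)
      (f' := fun u => l u * y u * Real.exp (-∫ s in (0 : ℝ)..u, s * l s)
        + y' u * (Real.exp (-∫ s in (0 : ℝ)..u, s * l s) * -(u * l u)) - l u)
      ?_ (fun u hu => ?_) (fun u hu => ?_)
    · exact ((hsol.continuousOn_deriv.mono Icc_subset_Ici_self).mul
        (hsl.continuousOn_integral_Icc_of_Ici ht).neg.rexp).sub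
          (hl.continuousOn_integral_Icc_of_Ici ht)
    · rw [interior_Icc] at hu
      exact (((hsol.hasDerivAt_deriv u hu.1.le).mul
        (hsl.hasDerivAt_integral_of_Ici hu.1).neg.exp).sub
          (hl.hasDerivAt_integral_of_Ici hu.1)).hasDerivWithinAt
    · -- with `E = exp (-∫₀ᵘ s l s ds) ∈ (0, 1]`, the derivative is
      -- `l (E (y - u y') - 1) ≤ l (E - 1) ≤ 0`
      rw [interior_Icc] at hu
      have hB : 0 ≤ ∫ s in (0 : ℝ)..u, s * l s :=
        intervalIntegral.integral_nonneg hu.1.le fun s hs => mul_nonneg hs.1 (hlnn s hs.1)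
      have hE : Real.exp (-∫ s in (0 : ℝ)..u, s * l s) ≤ 1 :=
        Real.exp_le_one_iff.2 (by linarith)
      have hl := hlnn u hu.1.le
      nlinarith [mul_nonneg (mul_nonneg hl (Real.exp_pos (-∫ s in (0 : ℝ)..u, s * l s)).le)
        (sub_nonneg.2 (hkey u hu.1.le)), mul_nonneg hl (sub_nonneg.2 hE)]
  simpa using hw ⟨le_rfl, ht⟩ ⟨ht, le_rfl⟩ ht

theorem le_mul_exp_mul_add_one (hsol : SolvesOnIci l y y') (hl : ContinuousOn l (Ici 0))
    (hlnn : ∀ t ≥ (0 : ℝ), 0 ≤ l t) (hb0 : IntegrableOn (fun t => t * l t) (Ioi 0))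
    (hb1 : IntegrableOn l (Ioi 0)) (hy0 : y 0 = 1) (hy'0 : 0 ≤ y' 0) {t : ℝ} (ht : 0 ≤ t) :
    y t ≤ (y' 0 + ∫ s in Ioi 0, l s) * Real.exp (∫ s in Ioi 0, s * l s) * t + 1 := by
  have hkey := hsol.le_one_add_mul_deriv (hsol.monotoneOn_deriv hlnn hy0 hy'0) hy0
  set b₀ := ∫ s in Ioi 0, s * l s
  set b₁ := ∫ s in Ioi 0, l s
  set B := ∫ s in (0 : ℝ)..t, s * l s
  have hB : B ≤ b₀ :=
    intervalIntegral_le_setIntegral_Ioi hb0 (fun s hs => mul_nonneg hs.le (hlnn s hs.le)) ht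
  have hL : ∫ s in (0 : ℝ)..t, l s ≤ b₁ :=
    intervalIntegral_le_setIntegral_Ioi hb1 (fun s hs => hlnn s hs.le) ht
  have hb₁ : 0 ≤ b₁ := setIntegral_nonneg measurableSet_Ioi fun s hs => hlnn s hs.le
  have hy't : y' t ≤ (y' 0 + b₁) * Real.exp b₀ := calc
    y' t = y' t * Real.exp (-B) * Real.exp B := by
      rw [mul_assoc, ← Real.exp_add, neg_add_cancel, Real.exp_zero, mul_one]
    _ ≤ (y' 0 + b₁) * Real.exp b₀ :=
      mul_le_mul (by linarith [hsol.deriv_mul_exp_neg_le hl hlnn hkey ht])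
        (Real.exp_le_exp.2 hB) (Real.exp_pos _).le (by linarith)
  calc y t ≤ 1 + t * y' t := hkey t ht
    _ ≤ 1 + t * ((y' 0 + b₁) * Real.exp b₀) := by gcongr
    _ = _ := by ring

end SolvesOnIci

theorem stmt_8_general (l y y' : ℝ → ℝ) (h : ℝ)
    (hl : ContinuousOn l (Set.Ici 0))
    (hlnn : ∀ t ≥ (0:ℝ), 0 ≤ l t)
    (hb0int : IntegrableOn (fun t => t * l t) (Set.Ioi 0))
    (hb1int : IntegrableOn l (Set.Ioi 0))
    (hh : 0 ≤ h)
    (hy : ∀ t ≥ (0:ℝ), HasDerivAt y (y' t) t)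
    (hy' : ∀ t ≥ (0:ℝ), HasDerivAt y' (l t * y t) t)
    (hy0 : y 0 = 1) (hy'0 : y' 0 = h) :
    ∀ t ≥ (0:ℝ),
      y t ≤ Real.exp (∫ s in Set.Ioi (0:ℝ), s * l s) *
        (h * (1 + ∫ s in Set.Ioi (0:ℝ), s * l s) + ∫ s in Set.Ioi (0:ℝ), l s) * t + 1 := by
  intro t ht
  have hb0 : 0 ≤ ∫ s in Ioi (0:ℝ), s * l s :=
    setIntegral_nonneg measurableSet_Ioi fun s hs => mul_nonneg hs.le (hlnn s hs.le)
  calc y t ≤ (h + ∫ s in Ioi 0, l s) * Real.exp (∫ s in Ioi 0, s * l s) * t + 1 :=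
        hy'0 ▸ SolvesOnIci.le_mul_exp_mul_add_one ⟨hy, hy'⟩ hl hlnn hb0int hb1int hy0
          (hy'0 ▸ hh) ht
    _ ≤ _ := by
      rw [mul_comm (h + _)]
      gcongr
      nlinarith [mul_nonneg hh hb0]

/-- With `l` continuous, nonnegative, nonincreasing, `b₀ = ∫₀^∞ t·l t dt < ∞`,
`b₁ = ∫₀^∞ l t dt`, and `y'' = l·y`, `y 0 = 1`, `y' 0 = h ≥ 0`, we have
`y t ≤ e^{b₀}·(h·(1+b₀) + b₁)·t + 1` for all `t ≥ 0`. -/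
theorem stmt_8 (l y y' : ℝ → ℝ) (h : ℝ)
    (hl : ContinuousOn l (Set.Ici 0))
    (hlnn : ∀ t ≥ (0:ℝ), 0 ≤ l t)
    (hlmono : AntitoneOn l (Set.Ici 0))
    (hb0int : IntegrableOn (fun t => t * l t) (Set.Ioi 0))
    (hb1int : IntegrableOn l (Set.Ioi 0))
    (hh : 0 ≤ h)
    (hy : ∀ t ≥ (0:ℝ), HasDerivAt y (y' t) t)
    (hy' : ∀ t ≥ (0:ℝ), HasDerivAt y' (l t * y t) t)
    (hy'c : ContinuousOn y' (Set.Ici 0))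
    (hy0 : y 0 = 1) (hy'0 : y' 0 = h) :
    ∀ t ≥ (0:ℝ),
      y t ≤ Real.exp (∫ s in Set.Ioi (0:ℝ), s * l s) *
        (h * (1 + ∫ s in Set.Ioi (0:ℝ), s * l s) + ∫ s in Set.Ioi (0:ℝ), l s) * t + 1 :=
  stmt_8_general l y y' h hl hlnn hb0int hb1int hh hy hy' hy0 hy'0
end

section
/- For the 3-dimensional Schwarzschild manifold with mass m > 0, the constant b₀ := ∫₀^∞ t·λ(t) dt, which after the substitution r = F(s) equals (m/2)·∫_m^∞ F(s)/(s³·√(ω(s))) ds with ω(s) = 1 − m/s and F(s) = s·√ω + (m/2)·log((1+√ω)/(1−√ω)), evaluates to (1/3)·(1 + log 4). -/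
/-! With `u = √(1 - m/s)` one has `1 - u² = m/s` and `du/ds = m / (2 s² u)`, so the integrand
times `m` is `ψ'(u) du/ds` for the elementary function `ψ` below, whose derivative is
`2u + (1 - u²) log((1 + u)/(1 - u))`. As `s` runs over `(m, ∞)`, `u` runs over `(0, 1)`, hence the
integral equals `(ψ 1 - ψ 0) / m = (2/3 + (4/3) log 2) / m`. -/

open MeasureTheory Real Filter Set Topology

/-- Written with the products `x log x`, `ψ` is continuous on all of `ℝ`, in particular at
`u = 1`, which corresponds to `s = ∞`. -/
noncomputable def psi (u : ℝ) : ℝ :=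
  (2 * u ^ 2 + (2 - u) * (1 + u) * ((1 + u) * log (1 + u)) +
    (2 + u) * (1 - u) * ((1 - u) * log (1 - u))) / 3

lemma continuous_psi : Continuous psi := by
  have h₁ : Continuous fun u : ℝ ↦ (1 + u) * log (1 + u) :=
    (continuous_const.add continuous_id).mul_log
  have h₂ : Continuous fun u : ℝ ↦ (1 - u) * log (1 - u) :=
    (continuous_const.sub continuous_id).mul_log
  unfold psi
  fun_prop

lemma psi_zero : psi 0 = 0 := by simp [psi]

lemma psi_one : psi 1 = 2 / 3 + 4 / 3 * log 2 := by
  norm_num [psi]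
  ring

lemma hasDerivAt_psi {u : ℝ} (hu : u ∈ Ioo (-1) 1) :
    HasDerivAt psi (2 * u + (1 - u ^ 2) * (log (1 + u) - log (1 - u))) u := by
  have h₁ : HasDerivAt (fun u : ℝ ↦ (1 + u) * log (1 + u)) (log (1 + u) + 1) u :=
    (hasDerivAt_mul_log (by linarith [hu.1])).comp_const_add 1 u
  have h₂ : HasDerivAt (fun u : ℝ ↦ (1 - u) * log (1 - u)) (-(log (1 - u) + 1)) u :=
    (hasDerivAt_mul_log (by linarith [hu.2])).comp_const_sub 1 u
  have hψ := ((((hasDerivAt_pow 2 u).const_mul 2).add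
    ((((hasDerivAt_id' u).const_sub 2).mul ((hasDerivAt_id' u).const_add 1)).mul h₁)).add
    ((((hasDerivAt_id' u).const_add 2).mul ((hasDerivAt_id' u).const_sub 1)).mul h₂)).div_const 3
  refine hψ.congr_deriv ?_
  simp only [Pi.mul_apply]
  push_cast
  ring

noncomputable def schwarzschildIntegrand (m s : ℝ) : ℝ :=
  (s * √(1 - m / s) + (m / 2) * (log (1 + √(1 - m / s)) - log (1 - √(1 - m / s)))) /
    (s ^ 3 * √(1 - m / s))

section

variable {m s : ℝ}

lemma one_sub_div_mem_Ioo (hm : 0 < m) (hs : m < s) : 1 - m / s ∈ Ioo 0 1 := by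
  have hs₀ : 0 < s := hm.trans hs
  constructor
  · linarith [(div_lt_one hs₀).2 hs]
  · linarith [div_pos hm hs₀]

lemma sqrt_one_sub_div_mem_Ioo (hm : 0 < m) (hs : m < s) : √(1 - m / s) ∈ Ioo 0 1 := by
  obtain ⟨hω₀, hω₁⟩ := one_sub_div_mem_Ioo hm hs
  exact ⟨sqrt_pos.2 hω₀, (sqrt_lt' one_pos).2 (by linarith)⟩

lemma schwarzschildIntegrand_nonneg (hm : 0 < m) (hs : m < s) :
    0 ≤ schwarzschildIntegrand m s := by
  obtain ⟨hu₀, hu₁⟩ := sqrt_one_sub_div_mem_Ioo hm hs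
  have hlog : log (1 - √(1 - m / s)) ≤ log (1 + √(1 - m / s)) :=
    log_le_log (by linarith) (by linarith)
  have hs₀ : 0 < s := hm.trans hs
  unfold schwarzschildIntegrand
  positivity

lemma hasDerivAt_psi_sqrt_one_sub_div (hm : 0 < m) (hs : m < s) :
    HasDerivAt (fun s ↦ psi √(1 - m / s)) (m * schwarzschildIntegrand m s) s := by
  have hs₀ : s ≠ 0 := (hm.trans hs).ne'
  have hω₀ := (one_sub_div_mem_Ioo hm hs).1
  have hu := sqrt_one_sub_div_mem_Ioo hm hs
  have hω : HasDerivAt (fun s ↦ 1 - m / s) (m / s ^ 2) s := by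
    simpa [div_eq_mul_inv] using ((hasDerivAt_inv hs₀).const_mul m).const_sub 1
  have hu₂ : √(1 - m / s) ^ 2 = 1 - m / s := sq_sqrt hω₀.le
  refine ((hasDerivAt_psi ⟨by linarith [hu.1], hu.2⟩).comp s (hω.sqrt hω₀.ne')).congr_deriv ?_
  unfold schwarzschildIntegrand
  rw [hu₂]
  field_simp
  ring

lemma tendsto_sqrt_one_sub_div_atTop (m : ℝ) :
    Tendsto (fun s ↦ √(1 - m / s)) atTop (𝓝 1) := by
  have hω : Tendsto (fun s ↦ 1 - m / s) atTop (𝓝 (1 - 0)) :=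
    tendsto_const_nhds.sub (tendsto_const_nhds.div_atTop tendsto_id)
  simpa using hω.sqrt

lemma integral_schwarzschildIntegrand (hm : 0 < m) :
    ∫ s in Ioi m, schwarzschildIntegrand m s = psi 1 / m := by
  have hcont : ContinuousAt (fun s ↦ psi √(1 - m / s) / m) m := by
    have : ContinuousAt (fun s ↦ √(1 - m / s)) m := by fun_prop (disch := exact hm.ne')
    exact (continuous_psi.continuousAt.comp this).div_const m
  have h := integral_Ioi_of_hasDerivAt_of_nonneg hcont.continuousWithinAt
    (fun s hs ↦ by simpa [hm.ne'] using (hasDerivAt_psi_sqrt_one_sub_div hm hs).div_const m)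
    (fun s hs ↦ schwarzschildIntegrand_nonneg hm hs)
    (((continuous_psi.tendsto 1).comp (tendsto_sqrt_one_sub_div_atTop m)).div_const m)
  simpa [hm.ne', psi_zero] using h

end

/-- `b₀` for the 3-dimensional Schwarzschild manifold: with `ω s = 1 − m/s` and
`F s = s·√(ω s) + (m/2)(log(1+√(ω s)) − log(1−√(ω s)))`, one has
`(m/2)·∫_m^∞ F s / (s³·√(ω s)) ds = (1 + log 4)/3`. -/
theorem stmt_16 (m : ℝ) (hm : 0 < m) :
    (m / 2) * ∫ s in Set.Ioi m,
        (s * Real.sqrt (1 - m / s) +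
          (m / 2) * (Real.log (1 + Real.sqrt (1 - m / s)) -
            Real.log (1 - Real.sqrt (1 - m / s)))) /
          (s ^ 3 * Real.sqrt (1 - m / s)) =
      (1 + Real.log 4) / 3 := by
  have hlog4 : log 4 = 2 * log 2 := by
    rw [show (4 : ℝ) = 2 ^ 2 by norm_num, log_pow, Nat.cast_ofNat]
  change m / 2 * ∫ s in Ioi m, schwarzschildIntegrand m s = _
  rw [integral_schwarzschildIntegrand hm, psi_one, hlog4]
  field_simp
  ring
end
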